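/- arXiv:2211.09432 — 2 statements merged into one kernel-verified Lean document; each statement's English description precedes it below -/
import Mathlib

section
/- Let k ≥ 0 be an integer and n ≥ k + 5. Then the graph K_{k+3} ∨ (K₂ ∪ K̄_{n−k−5}) contains no subgraph isomorphic to 2P₅ ∪ kS₄. -/
open SimpleGraph

/-- The number of edges of a simple graph. -/
noncomputable def edgeCount {V : Type*} (G : SimpleGraph V) : ℕ :=
  Nat.card G.edgeSet

/-- `Contains G H` means `G` contains a subgraph isomorphic to `H`,
i.e. there is an injective graph homomorphism from `H` to `G`. -/
def Contains {V W : Type*} (G : SimpleGraph V) (H : SimpleGraph W) : Prop :=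
  ∃ f : H →g G, Function.Injective f

/-- The Turán number `ex(n, H)`: the maximum number of edges of a simple graph on `n`
vertices containing no subgraph isomorphic to `H`. -/
noncomputable def exNum (n : ℕ) {W : Type*} (H : SimpleGraph W) : ℕ :=
  sSup {m : ℕ | ∃ G : SimpleGraph (Fin n), ¬ Contains G H ∧ edgeCount G = m}

/-- The disjoint union of `k` copies of `G`. -/
def copies {V : Type*} (k : ℕ) (G : SimpleGraph V) : SimpleGraph (Fin k × V) where
  Adj u v := u.1 = v.1 ∧ G.Adj u.2 v.2
  symm := ⟨fun u v h => ⟨h.1.symm, h.2.symm⟩⟩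
  loopless := ⟨fun u h => G.irrefl h.2⟩

/-- The join `G ∨ H` of two graphs: their disjoint union together with all edges
between the two vertex sets. -/
def graphJoin {V W : Type*} (G : SimpleGraph V) (H : SimpleGraph W) : SimpleGraph (V ⊕ W) where
  Adj u v := (G.sum H).Adj u v ∨ (u.isLeft ∧ v.isRight) ∨ (u.isRight ∧ v.isLeft)
  symm := ⟨fun u v h => by
    rcases h with h | ⟨h1, h2⟩ | ⟨h1, h2⟩
    · exact Or.inl h.symm
    · exact Or.inr (Or.inr ⟨h2, h1⟩)
    · exact Or.inr (Or.inl ⟨h2, h1⟩)⟩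
  loopless := ⟨fun u => by cases u <;> simp [SimpleGraph.sum]⟩

/-- The star with `m` leaves (a graph on `m + 1` vertices). -/
def starGraph' (m : ℕ) : SimpleGraph (Fin 1 ⊕ Fin m) :=
  completeBipartiteGraph (Fin 1) (Fin m)

/- In `K_{k+3} ∨ (K₂ ∪ K̄)` the vertices outside the clique span a single edge, and an injective
homomorphism pulls this back: the vertices of `2P₅ ∪ kS₄` landing outside the clique span at most
one edge. Every vertex of `P₅` lies on neither of some two edges of `P₅`, so each path sends at
least two vertices into the clique, and each star (having two edges) at least one. That is
`4 + k` distinct vertices in a clique of size `k + 3`. -/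

open Function

theorem card_le_card_of_injective_of_isLeft {ι α β : Type*} [Fintype ι] [Fintype α]
    {g : ι → α ⊕ β} (hg : Injective g) (hl : ∀ i, (g i).isLeft) :
    Fintype.card ι ≤ Fintype.card α :=
  Fintype.card_le_of_injective (fun i => (g i).getLeft (hl i)) fun i j h =>
    hg <| by
      rw [← Sum.inl_getLeft (g i) (hl i), ← Sum.inl_getLeft (g j) (hl j)]; exact congrArg _ h

namespace SimpleGraph

variable {V W : Type*}

def SpansAtMostOneEdge (G : SimpleGraph V) (s : Set V) : Prop :=
  {e ∈ G.edgeSet | ∀ v ∈ e, v ∈ s}.Subsingleton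

namespace SpansAtMostOneEdge

variable {G : SimpleGraph V} {s : Set V}

theorem preimage {H : SimpleGraph W} (f : Copy H G) (hs : G.SpansAtMostOneEdge s) :
    H.SpansAtMostOneEdge (f ⁻¹' s) := by
  rintro e₁ ⟨he₁, hs₁⟩ e₂ ⟨he₂, hs₂⟩
  exact Sym2.map.injective f.injective
    (hs ⟨f.toHom.map_mem_edgeSet he₁, by simpa [Sym2.mem_map] using hs₁⟩
      ⟨f.toHom.map_mem_edgeSet he₂, by simpa [Sym2.mem_map] using hs₂⟩)

theorem exists_not_mem {e₁ e₂ : Sym2 V} (hs : G.SpansAtMostOneEdge s) (he₁ : e₁ ∈ G.edgeSet)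
    (he₂ : e₂ ∈ G.edgeSet) (hne : e₁ ≠ e₂) : ∃ v, (v ∈ e₁ ∨ v ∈ e₂) ∧ v ∉ s := by
  by_contra! h
  exact hne (hs ⟨he₁, fun v hv => h v (.inl hv)⟩ ⟨he₂, fun v hv => h v (.inr hv)⟩)

theorem exists_embedding_fin_two_not_mem [Nonempty V] (hs : G.SpansAtMostOneEdge s)
    (hG : ∀ v, ∃ e₁ ∈ G.edgeSet, ∃ e₂ ∈ G.edgeSet, e₁ ≠ e₂ ∧ v ∉ e₁ ∧ v ∉ e₂) :
    ∃ e : Fin 2 ↪ V, ∀ i, e i ∉ s := by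
  obtain ⟨e₁, he₁, e₂, he₂, hne, -⟩ := hG (Classical.arbitrary V)
  obtain ⟨a, -, ha⟩ := hs.exists_not_mem he₁ he₂ hne
  obtain ⟨f₁, hf₁, f₂, hf₂, hne', ha₁, ha₂⟩ := hG a
  obtain ⟨b, hb, hbs⟩ := hs.exists_not_mem hf₁ hf₂ hne'
  have hab : a ≠ b := by rintro rfl; tauto
  exact ⟨Embedding.embFinTwo hab, fun i => by fin_cases i <;> assumption⟩

end SpansAtMostOneEdge

theorem spansAtMostOneEdge_top_fin_two_sum_bot :
    ((⊤ : SimpleGraph (Fin 2)) ⊕g (⊥ : SimpleGraph W)).SpansAtMostOneEdge Set.univ := by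
  refine Set.subsingleton_of_forall_eq s(.inl 0, .inl 1) fun e ⟨he, _⟩ => ?_
  induction e using Sym2.ind with
  | _ x y =>
    rcases x with a | _ <;> rcases y with b | _ <;> simp at he
    fin_cases a <;> fin_cases b <;> simp_all [Sym2.eq_swap]

theorem SpansAtMostOneEdge.graphJoin_setOf_isRight {G : SimpleGraph V} {H : SimpleGraph W}
    (hH : H.SpansAtMostOneEdge Set.univ) :
    (graphJoin G H).SpansAtMostOneEdge {x | x.isRight} := by
  have hlift : ∀ e ∈ {e ∈ (graphJoin G H).edgeSet | ∀ v ∈ e, v ∈ {x : V ⊕ W | x.isRight}},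
      ∃ e' ∈ H.edgeSet, e = e'.map .inr := by
    rintro e ⟨he, hr⟩
    induction e using Sym2.ind with
    | _ x y =>
      obtain ⟨x, rfl⟩ := Sum.isRight_iff.mp (hr x (Sym2.mem_mk_left x y))
      obtain ⟨y, rfl⟩ := Sum.isRight_iff.mp (hr _ (Sym2.mem_mk_right _ y))
      exact ⟨s(x, y), by simpa [graphJoin] using he, rfl⟩
  intro e₁ h₁ e₂ h₂
  obtain ⟨e₁', h₁', rfl⟩ := hlift e₁ h₁
  obtain ⟨e₂', h₂', rfl⟩ := hlift e₂ h₂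
  exact congrArg _ (hH ⟨h₁', fun _ _ => trivial⟩ ⟨h₂', fun _ _ => trivial⟩)

def copiesIncl {k : ℕ} (G : SimpleGraph V) (j : Fin k) : Copy G (copies k G) :=
  ⟨⟨fun v => (j, v), fun h => ⟨rfl, h⟩⟩, fun _ _ h => congrArg Prod.snd h⟩

theorem pathGraph_five_exists_two_edges_not_mem (v : Fin 5) :
    ∃ e₁ ∈ (pathGraph 5).edgeSet, ∃ e₂ ∈ (pathGraph 5).edgeSet, e₁ ≠ e₂ ∧ v ∉ e₁ ∧ v ∉ e₂ := by
  fin_cases v <;>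
    [refine ⟨s(1, 2), ?_, s(2, 3), ?_⟩; refine ⟨s(2, 3), ?_, s(3, 4), ?_⟩;
      refine ⟨s(0, 1), ?_, s(3, 4), ?_⟩; refine ⟨s(0, 1), ?_, s(1, 2), ?_⟩;
      refine ⟨s(0, 1), ?_, s(1, 2), ?_⟩] <;>
    simp [pathGraph_adj]

end SimpleGraph

theorem G3_free_general (k n : ℕ) :
    ¬ Contains
      (graphJoin (⊤ : SimpleGraph (Fin (k + 3)))
        ((⊤ : SimpleGraph (Fin 2)) ⊕g (⊥ : SimpleGraph (Fin (n - k - 5)))))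
      (copies 2 (pathGraph 5) ⊕g copies k (starGraph' 4)) := by
  rintro ⟨f, hf⟩
  have hR := (spansAtMostOneEdge_top_fin_two_sum_bot.graphJoin_setOf_isRight
    (G := ⊤)).preimage (f.toCopy hf)
  have hpath (j : Fin 2) : ∃ e : Fin 2 ↪ Fin 5, ∀ i, (f (.inl (j, e i))).isLeft := by
    obtain ⟨e, he⟩ := (hR.preimage (Embedding.sumInl.toCopy.comp (copiesIncl _ j)))
      |>.exists_embedding_fin_two_not_mem pathGraph_five_exists_two_edges_not_mem
    exact ⟨e, fun i => Sum.not_isRight.mp (he i)⟩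
  have hstar (i : Fin k) : ∃ v, (f (.inr (i, v))).isLeft := by
    obtain ⟨v, -, hv⟩ := (hR.preimage (Embedding.sumInr.toCopy.comp (copiesIncl _ i)))
      |>.exists_not_mem (e₁ := s(.inl 0, .inr 0)) (e₂ := s(.inl 0, .inr 1))
        (by simp [starGraph']) (by simp [starGraph']) (by simp)
    exact ⟨v, Sum.not_isRight.mp hv⟩
  choose e he using hpath
  choose c hc using hstar
  have hinj : Injective (Sum.map (fun p : Fin 2 × Fin 2 => (p.1, e p.1 p.2))
      (fun i : Fin k => (i, c i))) := by
    refine Sum.map_injective.mpr ⟨?_, fun i i' h => congrArg Prod.fst h⟩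
    rintro ⟨j, a⟩ ⟨j', a'⟩ h
    simp only [Prod.mk.injEq] at h
    obtain ⟨rfl, h⟩ := h
    rw [(e j).injective h]
  have := card_le_card_of_injective_of_isLeft (hf.comp hinj) (by rintro (p | i) <;> simp [he, hc])
  simp at this
  omega

/-- `K_{k+3} ∨ (K₂ ∪ K̄_{n-k-5})` contains no copy of `2 P₅ ∪ k S₄`. -/
theorem G3_free (k n : ℕ) (hn : k + 5 ≤ n) :
    ¬ Contains
      (graphJoin (⊤ : SimpleGraph (Fin (k + 3)))
        ((⊤ : SimpleGraph (Fin 2)) ⊕g (⊥ : SimpleGraph (Fin (n - k - 5)))))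
      (copies 2 (pathGraph 5) ⊕g copies k (starGraph' 4)) :=
  G3_free_general k n
end

section
/- Let ℓ ≥ 2 and d ≥ 1 be integers with n = d(ℓ−1) ≥ 2. Then ex(n, P_ℓ) = (ℓ−2)n/2, and every graph on n vertices with (ℓ−2)n/2 edges containing no copy of P_ℓ is isomorphic to dK_{ℓ−1}, the disjoint union of d complete graphs on ℓ−1 vertices. -/
/-!
Write `ℓ = k + 2`. By induction on `|V|`, a graph with no path on `k + 2` vertices has
`2 e(G) ≤ k |V|`, with equality only for disjoint unions of copies of `K_{k+1}`.

If some nonempty union of components has at most `k + 1` vertices, it spans at most `k/2` edges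
per vertex, with equality only for a `K_{k+1}`, and we recurse on the rest. Otherwise the vertex
set of a longest path is not a union of components, and one of its endpoints has degree at most
`k/2`: if the endpoint degrees summed to at least the number of vertices of the path, two crossing
edges would close it into a cycle, which an edge leaving it would turn into a longer path.
Deleting that endpoint loses at most `k/2` edges, and equality is impossible: the rest would be a
union of `K_{k+1}`'s, and a neighbour's clique would give a path on `k + 2` vertices.
-/

open SimpleGraph

/-- The star with `m` leaves (a graph on `m + 1` vertices). -/
def starGraph (m : ℕ) : SimpleGraph (Fin 1 ⊕ Fin m) :=
  completeBipartiteGraph (Fin 1) (Fin m)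

namespace List

variable {α : Type*}

theorem exists_mem_of_length_lt_countP_add_countP {p q : α → Bool} :
    ∀ {l : List α}, l.length < l.countP p + l.countP q → ∃ x ∈ l, p x ∧ q x
  | [], h => by simp at h
  | x :: l, h => by
    by_cases hx : p x ∧ q x
    · exact ⟨x, mem_cons_self, hx⟩
    · have : l.length < l.countP p + l.countP q := by
        simp only [countP_cons, length_cons] at h
        split_ifs at h <;> simp_all <;> omega
      obtain ⟨y, hy, hpq⟩ := exists_mem_of_length_lt_countP_add_countP this
      exact ⟨y, mem_cons_of_mem x hy, hpq⟩

theorem exists_eq_append_cons_cons_of_mem_zip {a b : α} :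
    ∀ {l : List α}, (a, b) ∈ l.dropLast.zip l.tail →
      ∃ l₁ l₂, l = l₁ ++ a :: b :: l₂
  | [], h | [_], h => by simp at h
  | x :: y :: l, h => by
    rw [dropLast_cons_cons, tail_cons, zip_cons_cons, mem_cons] at h
    rcases h with h | h
    · obtain ⟨rfl, rfl⟩ := Prod.mk.inj h
      exact ⟨[], l, rfl⟩
    · obtain ⟨l₁, l₂, hl⟩ := exists_eq_append_cons_cons_of_mem_zip (l := y :: l) h
      exact ⟨x :: l₁, l₂, by simp [hl]⟩

theorem IsChain.exists_perm_head?_eq {R : α → α → Prop} {l : List α} (hl : l.IsChain R)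
    (hcyc : ∀ x ∈ l.getLast?, ∀ y ∈ l.head?, R x y) {x : α} (hx : x ∈ l) :
    ∃ l' : List α, l'.Perm l ∧ l'.IsChain R ∧ l'.head? = some x := by
  obtain ⟨l₁, l₂, rfl⟩ := append_of_mem hx
  refine ⟨x :: l₂ ++ l₁, perm_append_comm, isChain_append.mpr ⟨hl.right_of_append,
    hl.left_of_append, fun a ha b hb => hcyc a ?_ b ?_⟩, rfl⟩
  · simpa [getLast?_append] using ha
  · rcases l₁ with _ | ⟨c, l₁⟩
    · simp at hb
    · simpa using hb

end List

namespace SimpleGraph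

open Finset

variable {V W : Type*} {G : SimpleGraph V} {k m : ℕ}

def HasPath (G : SimpleGraph V) (m : ℕ) : Prop :=
  ∃ l : List V, l.IsChain G.Adj ∧ l.Nodup ∧ l.length = m

theorem HasPath.mono {m' : ℕ} (h : m' ≤ m) : G.HasPath m → G.HasPath m' := by
  rintro ⟨l, hc, hn, rfl⟩
  exact ⟨l.take m', hc.take _, hn.sublist (l.take_sublist m'), by simp [h]⟩

theorem HasPath.map {G' : SimpleGraph W} (f : G ↪g G') : G.HasPath m → G'.HasPath m := by
  rintro ⟨l, hc, hn, rfl⟩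
  exact ⟨l.map f, (List.isChain_map _).mpr (hc.imp fun _ _ => f.map_adj_iff.mpr),
    hn.map f.injective, by simp⟩

theorem contains_pathGraph_iff : Contains G (pathGraph m) ↔ G.HasPath m := by
  constructor
  · rintro ⟨f, hf⟩
    refine ⟨(List.finRange m).map f, ?_, (List.nodup_finRange m).map hf, by simp⟩
    refine (List.isChain_map _).mpr (List.isChain_iff_getElem.mpr fun i hi => f.map_adj ?_)
    simp [pathGraph_adj]
  · rintro ⟨l, hc, hn, rfl⟩
    refine ⟨⟨fun i => l[i], fun {i j} hij => ?_⟩,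
      fun i j h => Fin.ext (hn.getElem_inj_iff.mp h)⟩
    have hc' := List.isChain_iff_getElem.mp hc
    rcases pathGraph_adj.mp hij with h | h
    · simpa [← h] using hc' i (by omega)
    · simpa [← h] using (hc' j (by omega)).symm

theorem hasPath_card_add_one_of_isClique {s : Finset V} (hs : G.IsClique (s : Set V)) {u v : V}
    (hu : u ∈ s) (hv : v ∉ s) (hvu : G.Adj v u) : G.HasPath (#s + 1) := by
  classical
  have hnd : (u :: (s.erase u).toList).Nodup := by simp [nodup_toList]
  have hmem : ∀ a ∈ u :: (s.erase u).toList, a ∈ s := by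
    simp only [List.mem_cons, mem_toList]
    rintro a (rfl | ha)
    exacts [hu, mem_of_mem_erase ha]
  refine ⟨v :: u :: (s.erase u).toList,
    List.isChain_cons.mpr ⟨by simpa using hvu, ?_⟩, ?_, ?_⟩
  · exact (hnd.pairwise_of_forall_ne fun a ha b hb => hs (hmem a ha) (hmem b hb)).isChain
  · exact List.nodup_cons.mpr ⟨fun h => hv (hmem v h), hnd⟩
  · simp [card_erase_of_mem hu, Nat.sub_add_cancel (card_pos.mpr ⟨u, hu⟩)]

structure IsLongestPath (G : SimpleGraph V) (l : List V) : Prop where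
  isChain : l.IsChain G.Adj
  nodup : l.Nodup
  not_hasPath : ¬G.HasPath (l.length + 1)

theorem exists_isLongestPath [Finite V] [Nonempty V] (G : SimpleGraph V) :
    ∃ l, l ≠ [] ∧ G.IsLongestPath l := by
  classical
  have := Fintype.ofFinite V
  have hbound : ∀ m, G.HasPath m → m ≤ Fintype.card V := by
    rintro m ⟨l, -, hn, rfl⟩
    exact hn.length_le_card
  have h1 : G.HasPath 1 := ⟨[Classical.arbitrary V], by simp, by simp, rfl⟩
  obtain ⟨l, hc, hn, hl⟩ := Nat.findGreatest_spec (P := G.HasPath) (hbound 1 h1) h1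
  have hM := Nat.le_findGreatest (P := G.HasPath) (hbound 1 h1) h1
  exact ⟨l, List.ne_nil_of_length_pos (by omega), ⟨hc, hn,
    fun h => Nat.findGreatest_is_greatest (P := G.HasPath) (by omega) (hbound _ h) (hl ▸ h)⟩⟩

theorem IsLongestPath.reverse {l : List V} (hl : G.IsLongestPath l) : G.IsLongestPath l.reverse :=
  ⟨List.isChain_reverse.mpr (hl.isChain.imp fun _ _ h => h.symm),
    List.nodup_reverse.mpr hl.nodup, by simpa using hl.not_hasPath⟩

theorem IsLongestPath.mem_of_adj_head {l : List V} (hl : G.IsLongestPath l) {x y : V}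
    (hx : x ∈ l.head?) (hxy : G.Adj x y) : y ∈ l := by
  by_contra hy
  refine hl.not_hasPath ⟨y :: l, List.isChain_cons.mpr ⟨?_, hl.isChain⟩,
    List.nodup_cons.mpr ⟨hy, hl.nodup⟩, rfl⟩
  intro z hz
  cases Option.mem_unique hx hz
  exact hxy.symm

theorem IsLongestPath.mem_of_adj_of_cyclic {l C : List V} (hl : G.IsLongestPath l)
    (hCl : C.Perm l) (hC : C.IsChain G.Adj)
    (hcyc : ∀ x ∈ C.getLast?, ∀ y ∈ C.head?, G.Adj x y)
    {x y : V} (hx : x ∈ l) (hxy : G.Adj x y) : y ∈ l := by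
  obtain ⟨C', hC'C, hC', hx'⟩ := hC.exists_perm_head?_eq hcyc (hCl.mem_iff.mpr hx)
  have hC'l := hC'C.trans hCl
  have hlong : G.IsLongestPath C' :=
    ⟨hC', hC'l.nodup_iff.mpr hl.nodup, hC'l.length_eq ▸ hl.not_hasPath⟩
  exact hC'l.mem_iff.mp (hlong.mem_of_adj_head hx' hxy)

/-- Reversing `l₁ ++ [a]` joins the first vertex to `b`, and the edge from the last vertex to `a`
closes the cycle. -/
theorem exists_cyclic_perm_of_adj {l₁ l₂ : List V} {a b : V}
    (hl : (l₁ ++ a :: b :: l₂).IsChain G.Adj)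
    (hb : ∀ x ∈ (l₁ ++ a :: b :: l₂).head?, G.Adj x b)
    (ha : ∀ x ∈ (l₁ ++ a :: b :: l₂).getLast?, G.Adj x a) :
    ∃ C : List V, C.Perm (l₁ ++ a :: b :: l₂) ∧ C.IsChain G.Adj ∧
      ∀ x ∈ C.getLast?, ∀ y ∈ C.head?, G.Adj x y := by
  have hsplit : l₁ ++ a :: b :: l₂ = (l₁ ++ [a]) ++ b :: l₂ := by simp
  rw [hsplit] at hl hb ha ⊢
  refine ⟨(l₁ ++ [a]).reverse ++ b :: l₂, (List.reverse_perm _).append_right _,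
    List.isChain_append.mpr ⟨?_, hl.right_of_append, ?_⟩, ?_⟩
  · exact List.isChain_reverse.mpr (hl.left_of_append.imp fun _ _ h => h.symm)
  · intro x hx y hy
    rw [List.getLast?_reverse] at hx
    simp only [List.head?_cons, Option.mem_def, Option.some.injEq] at hy
    subst hy
    exact hb x (by simpa [List.head?_append] using hx)
  · intro x hx y hy
    simp only [List.reverse_append, List.reverse_cons, List.reverse_nil, List.nil_append,
      List.cons_append, List.head?_cons, Option.mem_def, Option.some.injEq] at hy
    subst hy
    rw [List.getLast?_append_cons] at hx
    exact ha x (List.mem_getLast?_append_of_mem_getLast? hx)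

def AdjClosed (G : SimpleGraph V) (s : Set V) : Prop :=
  ∀ ⦃u v⦄, G.Adj u v → u ∈ s → v ∈ s

theorem countP_adj_eq_degree [Fintype V] [DecidableRel G.Adj] {l : List V} (hl : l.Nodup) {x : V}
    (hx : ∀ y, G.Adj x y → y ∈ l) : l.countP (G.Adj x ·) = G.degree x := by
  classical
  rw [← card_neighborFinset_eq_degree, List.countP_eq_length_filter,
    ← List.toFinset_card_of_nodup (hl.filter _)]
  congr 1
  ext y
  simpa using hx y

theorem IsLongestPath.degree_head_add_degree_getLast_lt [Fintype V] [DecidableRel G.Adj]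
    {l : List V} (hl : G.IsLongestPath l) (hne : l ≠ []) (hopen : ¬G.AdjClosed {x | x ∈ l}) :
    G.degree (l.head hne) + G.degree (l.getLast hne) < l.length := by
  by_contra! hdeg
  have hhead : ∀ z, G.Adj (l.head hne) z → z ∈ l.tail := by
    intro z hz
    have hzl := hl.mem_of_adj_head (List.head?_eq_some_head hne ▸ rfl) hz
    rw [← List.cons_head_tail hne, List.mem_cons] at hzl
    exact hzl.resolve_left (G.ne_of_adj hz).symm
  have hlast : ∀ z, G.Adj (l.getLast hne) z → z ∈ l.dropLast := by
    intro z hz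
    have hzl := List.mem_reverse.mp
      (hl.reverse.mem_of_adj_head (by simp [List.getLast?_eq_some_getLast hne]) hz)
    rw [← List.dropLast_append_getLast hne, List.mem_append, List.mem_singleton] at hzl
    exact hzl.resolve_right (G.ne_of_adj hz).symm
  have hsnd : (l.dropLast.zip l.tail).countP (fun p => G.Adj (l.head hne) p.2) =
      G.degree (l.head hne) := by
    rw [← countP_adj_eq_degree (hl.nodup.sublist (List.tail_sublist l)) hhead,
      ← List.map_snd_zip (l₁ := l.dropLast) (l₂ := l.tail) (by simp), List.countP_map,
      List.map_snd_zip (by simp)]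
    rfl
  have hfst : (l.dropLast.zip l.tail).countP (fun p => G.Adj (l.getLast hne) p.1) =
      G.degree (l.getLast hne) := by
    rw [← countP_adj_eq_degree (hl.nodup.sublist (List.dropLast_sublist l)) hlast,
      ← List.map_fst_zip (l₁ := l.dropLast) (l₂ := l.tail) (by simp), List.countP_map,
      List.map_fst_zip (by simp)]
    rfl
  -- among the consecutive pairs `(a, b)` of `l`, one has `head ~ b` and `last ~ a`
  obtain ⟨⟨a, b⟩, hab, hb, ha⟩ := List.exists_mem_of_length_lt_countP_add_countP
    (p := fun p : V × V => G.Adj (l.head hne) p.2)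
    (q := fun p : V × V => G.Adj (l.getLast hne) p.1)
    (by rw [hsnd, hfst]; simp; grind [List.length_pos_of_ne_nil hne])
  obtain ⟨l₁, l₂, rfl⟩ := List.exists_eq_append_cons_cons_of_mem_zip hab
  obtain ⟨C, hCl, hC, hcyc⟩ := exists_cyclic_perm_of_adj hl.isChain
    (fun x hx => by simpa [Option.mem_unique hx (List.head?_eq_some_head hne)] using hb)
    (fun x hx => by simpa [Option.mem_unique hx (List.getLast?_eq_some_getLast hne)] using ha)
  exact hopen fun x y hxy hx => hl.mem_of_adj_of_cyclic hCl hC hcyc hx hxy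

theorem exists_two_mul_degree_le [Fintype V] [DecidableRel G.Adj] [Nonempty V]
    (hfree : ¬G.HasPath (k + 2))
    (hbig : ∀ s : Finset V, s.Nonempty → G.AdjClosed s → k + 2 ≤ #s) :
    ∃ v, 2 * G.degree v ≤ k := by
  classical
  obtain ⟨l, hne, hl⟩ := G.exists_isLongestPath
  have hlen : l.length ≤ k + 1 := by
    by_contra! h
    exact hfree (HasPath.mono h ⟨l, hl.isChain, hl.nodup, rfl⟩)
  have hopen : ¬G.AdjClosed {x | x ∈ l} := by
    intro hcl
    have := hbig l.toFinset ⟨_, List.mem_toFinset.mpr (List.head_mem hne)⟩ (by simpa using hcl)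
    rw [List.toFinset_card_of_nodup hl.nodup] at this
    omega
  have := hl.degree_head_add_degree_getLast_lt hne hopen
  by_cases h : G.degree (l.head hne) ≤ G.degree (l.getLast hne)
  · exact ⟨l.head hne, by omega⟩
  · exact ⟨l.getLast hne, by omega⟩

theorem edgeCount_congr {H : SimpleGraph W} (e : G ≃g H) : edgeCount G = edgeCount H :=
  Nat.card_congr e.mapEdgeSet

theorem edgeCount_sum [Finite V] [Finite W] (H : SimpleGraph W) :
    edgeCount (G ⊕g H) = edgeCount G + edgeCount H :=
  (Nat.card_congr edgeSetSumEquiv).trans Nat.card_sum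

theorem edgeCount_lt_edgeCount [Finite V] {H : SimpleGraph V} (h : G < H) :
    edgeCount G < edgeCount H := by
  simp only [edgeCount, Nat.card_coe_set_eq]
  exact Set.ncard_lt_ncard (edgeSet_strict_mono h)

theorem eq_top_of_edgeCount_eq [Finite V] (h : edgeCount G = edgeCount (⊤ : SimpleGraph V)) :
    G = ⊤ :=
  by_contra fun hG => (edgeCount_lt_edgeCount (lt_top_iff_ne_top.mpr hG)).ne h

theorem two_mul_edgeCount_top [Finite V] :
    2 * edgeCount (⊤ : SimpleGraph V) = Nat.card V * (Nat.card V - 1) := by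
  classical
  have := Fintype.ofFinite V
  rw [edgeCount, Nat.card_eq_fintype_card, ← edgeFinset_card,
    card_edgeFinset_top_eq_card_choose_two, Nat.card_eq_fintype_card, Nat.choose_two_right,
    Nat.two_mul_div_two_of_even (Nat.even_mul_pred_self _)]

theorem two_mul_edgeCount_le [Finite V] (G : SimpleGraph V) :
    2 * edgeCount G ≤ Nat.card V * (Nat.card V - 1) := by
  rw [← two_mul_edgeCount_top]
  exact Nat.mul_le_mul_left 2 (Nat.card_mono (Set.toFinite _) (edgeSet_mono le_top))

def AdjClosed.sumIso {s : Set V} [DecidablePred (· ∈ s)] (hs : G.AdjClosed s) :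
    G.induce s ⊕g G.induce sᶜ ≃g G where
  toEquiv := Equiv.Set.sumCompl s
  map_rel_iff' := by
    rintro (⟨u, hu⟩ | ⟨u, hu⟩) (⟨v, hv⟩ | ⟨v, hv⟩) <;> simp
    · exact fun h => hv (hs h hu)
    · exact fun h => hu (hs h.symm hv)

def copiesSuccIso (j : ℕ) (H : SimpleGraph W) : H ⊕g copies j H ≃g copies (j + 1) H where
  toEquiv := optionProdEquiv.symm.trans ((finSuccEquiv j).symm.prodCongr (Equiv.refl W))
  map_rel_iff' := by
    rintro (x | ⟨a, x⟩) (y | ⟨b, y⟩) <;> simp [copies, eq_comm]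

theorem Embedding.exists_isClique_copies_top {j m : ℕ}
    (f : copies j (⊤ : SimpleGraph (Fin m)) ↪g G) (p : Fin j × Fin m) :
    ∃ s : Finset V, G.IsClique (s : Set V) ∧ #s = m ∧ f p ∈ s ∧ ↑s ⊆ Set.range f := by
  refine ⟨univ.map ⟨fun i => f (p.1, i), fun i i' h => (Prod.ext_iff.mp (f.injective h)).2⟩,
    ?_, by simp, mem_map.mpr ⟨p.2, mem_univ _, rfl⟩, ?_⟩
  · simp only [coe_map, coe_univ, Set.image_univ]
    rintro _ ⟨i, rfl⟩ _ ⟨i', rfl⟩ h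
    exact f.map_adj_iff.mpr ⟨rfl, by simpa using fun h' => h (by simp [h'])⟩
  · intro x hx
    obtain ⟨i, -, rfl⟩ := mem_map.mp hx
    exact ⟨_, rfl⟩

theorem not_hasPath_copies_top (j m : ℕ) :
    ¬(copies j (⊤ : SimpleGraph (Fin m))).HasPath (m + 1) := by
  rintro ⟨l, hc, hn, hl⟩
  have hfst : (l.map Prod.fst).Pairwise Eq :=
    ((List.isChain_map _).mpr (hc.imp fun _ _ h => h.1)).pairwise
  have hsnd : (l.map Prod.snd).Nodup := List.pairwise_map.mpr
    ((List.pairwise_map.mp hfst).and hn |>.imp fun h h' => h.2 (Prod.ext h.1 h'))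
  have := hsnd.length_le_card
  simp [hl] at this

theorem two_mul_edgeCount_copies_top (j k : ℕ) :
    2 * edgeCount (copies j (⊤ : SimpleGraph (Fin (k + 1)))) = k * (j * (k + 1)) := by
  induction j with
  | zero => simp [edgeCount]
  | succ j ih =>
    rw [← edgeCount_congr (copiesSuccIso j _), edgeCount_sum, mul_add, two_mul_edgeCount_top, ih]
    simp only [Nat.card_eq_fintype_card, Fintype.card_fin, Nat.add_sub_cancel]
    ring

def EdgeBound (k : ℕ) (G : SimpleGraph V) : Prop :=
  2 * edgeCount G ≤ k * Nat.card V ∧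
    (2 * edgeCount G = k * Nat.card V →
      ∃ j, Nonempty (G ≃g copies j (⊤ : SimpleGraph (Fin (k + 1)))))

theorem EdgeBound.of_isEmpty [IsEmpty V] : EdgeBound k G := by
  exact ⟨by simp [edgeCount],
    fun _ => ⟨0, ⟨⟨Equiv.equivOfIsEmpty _ _, fun {a} => isEmptyElim a⟩⟩⟩⟩

theorem EdgeBound.of_adjClosed [Finite V] {s : Set V} (hs : G.AdjClosed s) (hne : s.Nonempty)
    (hcard : Nat.card s ≤ k + 1) (h : EdgeBound k (G.induce sᶜ)) : EdgeBound k G := by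
  classical
  have hV : Nat.card V = Nat.card s + Nat.card ↥sᶜ := by
    rw [← Nat.card_congr (Equiv.Set.sumCompl s), Nat.card_sum]
  have hE : edgeCount G = edgeCount (G.induce s) + edgeCount (G.induce sᶜ) := by
    rw [← edgeCount_congr hs.sumIso, edgeCount_sum]
  have hc : 0 < Nat.card s := have := hne.to_subtype; Nat.card_pos
  have hR := h.1
  have hS := two_mul_edgeCount_le (G.induce s)
  have hck : Nat.card s * (Nat.card s - 1) ≤ k * Nat.card s := by
    rw [mul_comm k]; exact Nat.mul_le_mul_left _ (by omega)
  have hsplit : k * Nat.card V = k * Nat.card s + k * Nat.card ↥sᶜ := by rw [hV, mul_add]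
  refine ⟨by omega, fun heq => ?_⟩
  obtain ⟨j, ⟨e⟩⟩ := h.2 (by omega)
  have hsk : Nat.card s = k + 1 := by
    have : Nat.card s * (Nat.card s - 1) = Nat.card s * k := by rw [mul_comm _ k]; omega
    have := Nat.eq_of_mul_eq_mul_left hc this
    omega
  have htop : G.induce s = ⊤ :=
    eq_top_of_edgeCount_eq (by have := two_mul_edgeCount_top (V := s); omega)
  refine ⟨j + 1, ⟨hs.sumIso.symm.trans ((Iso.sumCongr ?_ e).trans (copiesSuccIso j _))⟩⟩
  rw [htop]
  exact Iso.completeGraph (Finite.equivFinOfCardEq hsk)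

theorem edgeCount_eq_edgeCount_induce_add_degree [Fintype V] [DecidableRel G.Adj] (v : V) :
    edgeCount G = edgeCount (G.induce {v}ᶜ) + G.degree v := by
  classical
  rw [edgeCount, edgeCount, Nat.card_eq_fintype_card, Nat.card_eq_fintype_card, ← edgeFinset_card,
    ← edgeFinset_card, card_edgeFinset_induce_compl_singleton, card_edgeFinset_deleteIncidenceSet,
    Nat.sub_add_cancel (G.degree_le_card_edgeFinset v)]

theorem EdgeBound.of_adj_of_two_mul_degree_le [Fintype V] [DecidableRel G.Adj] {u v : V}
    (hvu : G.Adj v u) (hv : 2 * G.degree v ≤ k) (hfree : ¬G.HasPath (k + 2))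
    (h : EdgeBound k (G.induce {v}ᶜ)) : EdgeBound k G := by
  classical
  have hE := edgeCount_eq_edgeCount_induce_add_degree (G := G) v
  have hV : Nat.card V = Nat.card ↥({v}ᶜ : Set V) + 1 := by
    rw [← Nat.card_congr (Equiv.Set.sumCompl {v}), Nat.card_sum, Nat.card_unique, add_comm]
  have hR := h.1
  have hsplit : k * Nat.card V = k * Nat.card ↥({v}ᶜ : Set V) + k := by rw [hV, mul_add_one]
  refine ⟨by omega, fun heq => ?_⟩
  obtain ⟨j, ⟨e⟩⟩ := h.2 (by omega)
  let f := (Embedding.induce ({v}ᶜ : Set V)).comp e.symm.toEmbedding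
  have hu : u ∈ ({v}ᶜ : Set V) := (G.ne_of_adj hvu).symm
  obtain ⟨s, hs, hcard, hus, hrange⟩ := f.exists_isClique_copies_top (e ⟨u, hu⟩)
  have hvs : v ∉ s := fun hvs => by
    obtain ⟨p, hp⟩ := hrange (mem_coe.mpr hvs)
    exact (e.symm p).2 (by simpa [f] using hp)
  -- `v`, then `u`, then the rest of the clique of `u` in `G - v`
  have := hasPath_card_add_one_of_isClique hs (by simpa [f] using hus) hvs hvu
  exact (hfree (by rwa [hcard] at this)).elim

theorem edgeBound_of_not_hasPath [Finite V] (G : SimpleGraph V) (hfree : ¬G.HasPath (k + 2)) :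
    EdgeBound k G := by
  classical
  induction hn : Nat.card V using Nat.strong_induction_on generalizing V with
  | _ n ih =>
  have := Fintype.ofFinite V
  have hind : ∀ s : Set V, s.Nonempty → EdgeBound k (G.induce sᶜ) := fun s ⟨x, hx⟩ =>
    ih _ (hn ▸ Finite.card_subtype_lt (p := (· ∈ sᶜ)) (x := x) (by simpa)) _
      (fun h => hfree (h.map (Embedding.induce _))) rfl
  rcases isEmpty_or_nonempty V with hV | hV
  · exact .of_isEmpty
  by_cases hsmall : ∃ s : Finset V, s.Nonempty ∧ G.AdjClosed s ∧ #s ≤ k + 1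
  · obtain ⟨s, hne, hs, hcard⟩ := hsmall
    exact .of_adjClosed hs (by simpa) (by simpa) (hind s (by simpa))
  push Not at hsmall
  obtain ⟨v, hv⟩ := exists_two_mul_degree_le hfree fun s hne hs => hsmall s hne hs
  obtain ⟨u, hvu⟩ : ∃ u, G.Adj v u := by
    by_contra! hiso
    have := hsmall {v} (by simp) fun x y hxy hx => by
      rw [coe_singleton, Set.mem_singleton_iff] at hx
      exact absurd (hx ▸ hxy) (hiso y)
    simp at this
  exact .of_adj_of_two_mul_degree_le hvu hv hfree (hind {v} (by simp))

theorem exists_not_hasPath_two_mul_edgeCount_eq {d k n : ℕ} (hn : n = d * (k + 1)) :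
    ∃ G : SimpleGraph (Fin n), ¬G.HasPath (k + 2) ∧ 2 * edgeCount G = k * n := by
  let e : Fin n ≃ Fin d × Fin (k + 1) := (finCongr hn).trans finProdFinEquiv.symm
  refine ⟨(copies d ⊤).comap e,
    fun h => not_hasPath_copies_top d (k + 1) (h.map (Iso.comap e _).toEmbedding), ?_⟩
  rw [edgeCount_congr (Iso.comap e _), two_mul_edgeCount_copies_top, hn]

end SimpleGraph

theorem erdos_gallai_path_general (ℓ d n : ℕ) (hℓ : 2 ≤ ℓ)
    (hn : n = d * (ℓ - 1)) :
    exNum n (pathGraph ℓ) = (ℓ - 2) * n / 2 ∧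
    ∀ G : SimpleGraph (Fin n), ¬ Contains G (pathGraph ℓ) →
      edgeCount G = (ℓ - 2) * n / 2 →
      Nonempty (G ≃g copies d (⊤ : SimpleGraph (Fin (ℓ - 1)))) := by
  obtain ⟨k, rfl⟩ : ∃ k, ℓ = k + 2 := ⟨ℓ - 2, by omega⟩
  simp only [exNum, contains_pathGraph_iff, Nat.add_sub_cancel, Nat.add_succ_sub_one] at hn ⊢
  have hbound (G : SimpleGraph (Fin n)) (hG : ¬G.HasPath (k + 2)) : EdgeBound k G :=
    edgeBound_of_not_hasPath G hG
  simp only [EdgeBound, Nat.card_eq_fintype_card, Fintype.card_fin] at hbound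
  obtain ⟨G₀, hfree₀, hE₀⟩ := exists_not_hasPath_two_mul_edgeCount_eq hn
  have hmax : IsGreatest {m | ∃ G : SimpleGraph (Fin n), ¬G.HasPath (k + 2) ∧ edgeCount G = m}
      (k * n / 2) := by
    refine ⟨⟨G₀, hfree₀, by omega⟩, ?_⟩
    rintro _ ⟨G, hG, rfl⟩
    have := (hbound G hG).1
    omega
  refine ⟨hmax.csSup_eq, fun G hG hE => ?_⟩
  obtain ⟨j, ⟨f⟩⟩ := (hbound G hG).2 (by omega)
  have hj : j = d := by
    have := Nat.card_congr f.toEquiv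
    simp only [Nat.card_eq_fintype_card, Fintype.card_fin, Fintype.card_prod, hn] at this
    exact (Nat.eq_of_mul_eq_mul_right (Nat.succ_pos k) this).symm
  exact hj ▸ ⟨f⟩

/-- Erdős–Gallai: Turán number of `P_ℓ` when `ℓ - 1` divides `n`, with the
unique extremal graph `d K_{ℓ-1}`. -/
theorem erdos_gallai_path (ℓ d n : ℕ) (hℓ : 2 ≤ ℓ) (hd : 1 ≤ d)
    (hn : n = d * (ℓ - 1)) (hn2 : 2 ≤ n) :
    exNum n (pathGraph ℓ) = (ℓ - 2) * n / 2 ∧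
    ∀ G : SimpleGraph (Fin n), ¬ Contains G (pathGraph ℓ) →
      edgeCount G = (ℓ - 2) * n / 2 →
      Nonempty (G ≃g copies d (⊤ : SimpleGraph (Fin (ℓ - 1)))) :=
  erdos_gallai_path_general ℓ d n hℓ hn
end
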